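/- Let $\sigma > 0$, let $\theta(z)$ be a nonzero polynomial with real coefficients, let $\phi(z)$ be a polynomial with real coefficients satisfying $\phi(z) \neq 0$ whenever $|z| = 1$, let $m$ be an integer, and let $n \geq 1$. For each real $d < m + 1/2$ and each integer $h$, define $\omega(h; d) = \int_{-\pi}^{\pi} \cos(h\nu)\, \frac{\sigma^2 |\theta(e^{-i\nu})|^2}{2\pi |\phi(e^{-i\nu})|^2} |1 - e^{-i\nu}|^{-2(d-m)} \, d\nu$, and let $\Omega(d)$ be the $n \times n$ real matrix with entries $\Omega(d)_{i i'} = \omega(i - i'; d)$ for $0 \leq i, i' < n$. Then for every $d < m + 1/2$ the matrix $\Omega(d)$ is symmetric positive definite, and for every fixed vector $v \in \mathbb{R}^n$ the function $d \mapsto -\tfrac{n}{2}\log(2\pi) - \tfrac12 \log \det \Omega(d) - \tfrac12 v^\top \Omega(d)^{-1} v$ is continuous on the interval $(-\infty, m + 1/2)$. -/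

import Mathlib

/-!
With `f` the ARMA spectral density and `s = -2(d - m)`, the entries of `Ω(d)` are the cosine
coefficients of the weight `w = f · |1 - e^{-iν}|^s`, so `xᵀ Ω(d) x = ∫ |∑ⱼ xⱼ e^{ijν}|² w(ν) dν`.
This is positive for `x ≠ 0`: the trigonometric polynomial and `w` vanish only at the countably
many `ν` for which `e^{±iν}` is a root of one of the nonzero polynomials `∑ⱼ xⱼ zʲ`, `θ`, `1 - z`.
Since `|1 - e^{-iν}| ≥ 2|ν|/π` on `[-π, π]`, the weight is integrable as soon as `s > -1`, i.e.
`d < m + 1/2`, and for `s` in `[lo, hi]` it is dominated by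
`f · (|1 - e^{-iν}|^lo + |1 - e^{-iν}|^hi)`.
Dominated convergence then makes `Ω` continuous, and the determinant and the inverse are continuous
wherever the determinant does not vanish.
-/

open MeasureTheory Set Filter Polynomial Complex Matrix
open scoped Real ComplexConjugate

lemma countable_setOf_exp_mul_I_eq (z : ℂ) : {ν : ℝ | exp (ν * I) = z}.Countable := by
  rcases eq_empty_or_nonempty {ν : ℝ | exp (ν * I) = z} with h | ⟨ν₀, hν₀⟩
  · simp [h]
  refine (countable_range fun k : ℤ => ν₀ + 2 * π * k).mono fun ν hν => ?_
  obtain ⟨k, hk⟩ := exp_eq_exp_iff_exists_int.mp ((hν : exp (ν * I) = z).trans hν₀.symm)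
  refine ⟨k, ofReal_injective (mul_right_cancel₀ I_ne_zero ?_)⟩
  push_cast
  rw [hk]
  ring

lemma countable_setOf_eval_exp_mul_I_eq_zero {p : ℂ[X]} (hp : p ≠ 0) :
    {ν : ℝ | p.eval (exp (ν * I)) = 0}.Countable :=
  ((p.finite_setOfPred_isRoot hp).countable.biUnion fun z _ => countable_setOf_exp_mul_I_eq z).mono
    fun ν hν => mem_biUnion (x := exp (ν * I)) hν rfl

lemma ae_eval_exp_mul_I_ne_zero {p : ℂ[X]} (hp : p ≠ 0) :
    ∀ᵐ ν : ℝ, p.eval (exp (ν * I)) ≠ 0 :=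
  measure_eq_zero_iff_ae_notMem.mp ((countable_setOf_eval_exp_mul_I_eq_zero hp).measure_zero _)

lemma ae_aeval_exp_neg_mul_I_ne_zero {p : ℝ[X]} (hp : p ≠ 0) :
    ∀ᵐ ν : ℝ, aeval (exp (-(ν * I))) p ≠ 0 := by
  have hmap : p.map (algebraMap ℝ ℂ) ≠ 0 :=
    (Polynomial.map_ne_zero_iff (algebraMap ℝ ℂ).injective).mpr hp
  have hcount := (countable_setOf_eval_exp_mul_I_eq_zero hmap).preimage neg_injective
  refine measure_eq_zero_iff_ae_notMem.mp (hcount.measure_zero _) |>.mono fun ν hν => ?_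
  simpa [aeval_def, eval_map] using hν

lemma Polynomial.eval_ofFn {n : ℕ} (v : Fin n → ℂ) (z : ℂ) :
    (ofFn n v).eval z = ∑ j, v j * z ^ (j : ℕ) := by
  simp [ofFn_eq_sum_monomial, eval_finsetSum]

lemma norm_sum_mul_exp_mul_I_pow_sq {n : ℕ} (x : Fin n → ℝ) (ν : ℝ) :
    ‖∑ j, (x j : ℂ) * exp (ν * I) ^ (j : ℕ)‖ ^ 2 =
      ∑ i, ∑ j, x i * x j * Real.cos ((((i : ℤ) - j : ℤ) : ℝ) * ν) := by
  have hterm : ∀ i j : Fin n,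
      (x i : ℂ) * exp (ν * I) ^ (i : ℕ) * conj ((x j : ℂ) * exp (ν * I) ^ (j : ℕ))
        = ((x i * x j : ℝ) : ℂ) * exp (((((i : ℤ) - j : ℤ) : ℝ) * ν : ℝ) * I) := by
    intro i j
    rw [map_mul, map_pow, conj_ofReal, ← exp_conj, ← exp_nat_mul, ← exp_nat_mul, map_mul,
      conj_ofReal, conj_I, mul_mul_mul_comm, ← exp_add]
    push_cast
    ring_nf
  have h := congrArg re (mul_conj' (∑ j, (x j : ℂ) * exp (ν * I) ^ (j : ℕ)))
  rw [map_sum, Finset.sum_mul_sum] at h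
  simp only [hterm, re_sum, re_ofReal_mul, exp_ofReal_mul_I_re] at h
  exact_mod_cast h.symm

lemma intervalIntegral_pos_of_ae_pos {f : ℝ → ℝ} {a b : ℝ} (hab : a < b)
    (hfi : IntervalIntegrable f volume a b) (hf : ∀ᵐ x, 0 < f x) : 0 < ∫ x in a..b, f x := by
  rw [intervalIntegral.integral_pos_iff_support_of_nonneg_ae (hf.mono fun x hx => hx.le) hfi,
    inter_comm, measure_inter_conull]
  · exact ⟨hab, (Measure.measure_Ioo_pos _).mpr hab |>.trans_le (measure_mono Ioo_subset_Ioc_self)⟩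
  · exact measure_eq_zero_iff_ae_notMem.mpr (hf.mono fun x hx => not_not.mpr hx.ne')

theorem posDef_toeplitz_of_eq_integral_cos_mul {n : ℕ} {w : ℝ → ℝ}
    (hw : IntervalIntegrable w volume (-π) π) (hw_pos : ∀ᵐ ν, 0 < w ν) {c : ℤ → ℝ}
    (hc : ∀ h : ℤ, c h = ∫ ν in -π..π, Real.cos (h * ν) * w ν) :
    (Matrix.of fun i j : Fin n => c (i - j)).PosDef := by
  have hcos_int : ∀ h : ℤ, IntervalIntegrable (fun ν => Real.cos (h * ν) * w ν) volume (-π) π :=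
    fun h => hw.continuousOn_mul (by fun_prop)
  have hc_neg : ∀ h : ℤ, c (-h) = c h := fun h => by simp [hc]
  refine Matrix.posDef_iff_dotProduct_mulVec.mpr ⟨?_, fun x hx => ?_⟩
  · refine Matrix.IsHermitian.ext fun i j => ?_
    simp [← hc_neg (j - i)]
  let T : ℝ → ℂ := fun ν => ∑ j, (x j : ℂ) * exp (ν * I) ^ (j : ℕ)
  have hquad : star x ⬝ᵥ (Matrix.of (fun i j : Fin n => c (i - j)) *ᵥ x)
      = ∫ ν in -π..π, ‖T ν‖ ^ 2 * w ν := by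
    calc star x ⬝ᵥ (Matrix.of (fun i j : Fin n => c (i - j)) *ᵥ x)
        = ∑ i, ∑ j, ∫ ν in -π..π, x i * x j * (Real.cos ((((i : ℤ) - j : ℤ) : ℝ) * ν) * w ν) := by
          simp only [dotProduct, mulVec, of_apply, hc, Finset.mul_sum,
            intervalIntegral.integral_const_mul, star_trivial]
          exact Finset.sum_congr rfl fun i _ => Finset.sum_congr rfl fun j _ => by ring
      _ = ∫ ν in -π..π, ∑ i, ∑ j, x i * x j * (Real.cos ((((i : ℤ) - j : ℤ) : ℝ) * ν) * w ν) := by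
          have hint : ∀ i j : Fin n, IntervalIntegrable
              (fun ν => x i * x j * (Real.cos ((((i : ℤ) - j : ℤ) : ℝ) * ν) * w ν)) volume (-π) π :=
            fun i j => (hcos_int _).const_mul _
          simp only [← intervalIntegral.integral_finsetSum fun j _ => hint _ j]
          refine (intervalIntegral.integral_finsetSum fun i _ => ?_).symm
          simpa only [Finset.sum_fn] using IntervalIntegrable.sum Finset.univ fun j _ => hint i j
      _ = ∫ ν in -π..π, ‖T ν‖ ^ 2 * w ν := by
          simp only [T, norm_sum_mul_exp_mul_I_pow_sq, Finset.sum_mul, mul_assoc]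
  have hT : ∀ᵐ ν : ℝ, T ν ≠ 0 := by
    have hP : ofFn n (fun j => (x j : ℂ)) ≠ 0 := by
      rw [← (ofFn n).map_zero]
      exact (injective_ofFn n).ne fun h => hx (funext fun j => by simpa using congrFun h j)
    simpa [T, eval_ofFn] using ae_eval_exp_mul_I_ne_zero hP
  rw [hquad]
  refine intervalIntegral_pos_of_ae_pos (by linarith [Real.pi_pos]) ?_ ?_
  · exact hw.continuousOn_mul (by fun_prop)
  · filter_upwards [hT, hw_pos] with ν hTν hwν
    exact mul_pos (by positivity) hwν

noncomputable def diffGain (ν : ℝ) : ℝ := ‖1 - exp (-(ν * I))‖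

lemma diffGain_eq_two_mul_abs_sin (ν : ℝ) : diffGain ν = 2 * |Real.sin (ν / 2)| := by
  have h : 1 - exp (-(ν * I)) = -(exp (I * ((-ν : ℝ) : ℂ)) - 1) := by push_cast; ring_nf
  rw [diffGain, h, norm_neg, norm_exp_I_mul_ofReal_sub_one, Real.norm_eq_abs, abs_mul, abs_two,
    neg_div, Real.sin_neg, abs_neg]

lemma continuous_diffGain : Continuous diffGain := by
  unfold diffGain
  fun_prop

lemma ae_diffGain_pos : ∀ᵐ ν : ℝ, 0 < diffGain ν := by
  have hp : (1 - X : ℝ[X]) ≠ 0 := fun h => by simpa using congrArg (eval 0) h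
  filter_upwards [ae_aeval_exp_neg_mul_I_ne_zero hp] with ν hν
  simpa [diffGain] using hν

lemma mul_abs_le_diffGain {ν : ℝ} (hν : |ν| ≤ π) : 2 / π * |ν| ≤ diffGain ν := by
  have h := Real.mul_abs_le_abs_sin (x := ν / 2) (by rw [abs_div, abs_two]; linarith)
  rw [abs_div, abs_two] at h
  rw [diffGain_eq_two_mul_abs_sin]
  linarith

lemma intervalIntegrable_abs_rpow {s : ℝ} (hs : -1 < s) (a b : ℝ) :
    IntervalIntegrable (fun x => |x| ^ s) volume a b := by
  have hpos : ∀ c, 0 ≤ c → IntervalIntegrable (fun x => |x| ^ s) volume 0 c := by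
    intro c hc
    refine (intervalIntegral.intervalIntegrable_rpow' hs).congr fun x hx => ?_
    rw [uIoc_of_le hc] at hx
    rw [abs_of_pos hx.1]
  have hall : ∀ c, IntervalIntegrable (fun x => |x| ^ s) volume 0 c := by
    intro c
    rcases le_total 0 c with hc | hc
    · exact hpos c hc
    · rw [IntervalIntegrable.iff_comp_neg]
      simpa using hpos (-c) (by linarith)
  exact (hall a).symm.trans (hall b)

lemma intervalIntegrable_diffGain_rpow {s : ℝ} (hs : -1 < s) :
    IntervalIntegrable (fun ν => diffGain ν ^ s) volume (-π) π := by
  rcases le_or_gt 0 s with h0 | h0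
  · exact (continuous_diffGain.rpow_const fun _ => Or.inr h0).intervalIntegrable _ _
  refine ((intervalIntegrable_abs_rpow hs _ _).const_mul ((2 / π) ^ s)).mono_fun
    (continuous_diffGain.measurable.pow_const s).aestronglyMeasurable ?_
  filter_upwards [ae_restrict_of_ae ae_diffGain_pos, ae_restrict_mem measurableSet_uIoc]
    with ν hb hν
  rw [uIoc_of_le (by linarith [Real.pi_pos])] at hν
  have hν0 : ν ≠ 0 := by
    rintro rfl
    simp [diffGain] at hb
  rw [Real.norm_of_nonneg (by positivity), Real.norm_of_nonneg (by positivity),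
    ← Real.mul_rpow (by positivity) (abs_nonneg _)]
  exact Real.rpow_le_rpow_of_nonpos (by positivity)
    (mul_abs_le_diffGain (abs_le.mpr ⟨hν.1.le, hν.2⟩)) h0.le

lemma Real.rpow_le_rpow_add_rpow {c x lo hi : ℝ} (hc : 0 < c) (hlo : lo ≤ x) (hhi : x ≤ hi) :
    c ^ x ≤ c ^ lo + c ^ hi := by
  rcases le_total c 1 with h | h
  · linarith [Real.rpow_le_rpow_of_exponent_ge hc h hlo, Real.rpow_nonneg hc.le hi]
  · linarith [Real.rpow_le_rpow_of_exponent_le h hhi, Real.rpow_nonneg hc.le lo]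

theorem continuousOn_integral_mul_diffGain_rpow {f : ℝ → ℝ} (hf : Continuous f) :
    ContinuousOn (fun s : ℝ => ∫ ν in -π..π, f ν * diffGain ν ^ s) (Ioi (-1)) := by
  intro s₀ (hs₀ : -1 < s₀)
  obtain ⟨C, hC⟩ := (isCompact_uIcc (a := -π) (b := π)).exists_bound_of_continuousOn
    hf.continuousOn
  obtain ⟨lo, hlo, hlo_lt⟩ := exists_between hs₀
  refine ContinuousAt.continuousWithinAt <| intervalIntegral.continuousAt_of_dominated_interval
    (bound := fun ν => C * (diffGain ν ^ lo + diffGain ν ^ (s₀ + 1))) ?_ ?_ ?_ ?_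
  · exact Eventually.of_forall fun s =>
      hf.aestronglyMeasurable.mul (continuous_diffGain.measurable.pow_const s).aestronglyMeasurable
  · filter_upwards [Ioo_mem_nhds hlo_lt (lt_add_one s₀)] with s hs
    filter_upwards [ae_diffGain_pos] with ν hb hν
    rw [norm_mul, Real.norm_of_nonneg (Real.rpow_nonneg hb.le s)]
    exact mul_le_mul (hC ν (uIoc_subset_uIcc hν))
      (Real.rpow_le_rpow_add_rpow hb hs.1.le hs.2.le) (by positivity)
      ((norm_nonneg _).trans (hC ν (uIoc_subset_uIcc hν)))
  · exact ((intervalIntegrable_diffGain_rpow hlo).add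
      (intervalIntegrable_diffGain_rpow (by linarith))).const_mul C
  · filter_upwards [ae_diffGain_pos] with ν hb _
    exact continuousAt_const.mul (Real.continuousAt_const_rpow hb.ne')

lemma norm_exp_neg_ofReal_mul_I (ν : ℝ) : ‖exp (-(ν * I))‖ = 1 := by
  rw [← neg_mul, ← ofReal_neg]
  exact norm_exp_ofReal_mul_I _

noncomputable def armaSpectralDensity (σ : ℝ) (θ φ : ℝ[X]) (ν : ℝ) : ℝ :=
  σ ^ 2 * ‖aeval (exp (-(ν * I))) θ‖ ^ 2 / (2 * π * ‖aeval (exp (-(ν * I))) φ‖ ^ 2)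

lemma continuous_armaSpectralDensity (σ : ℝ) (θ : ℝ[X]) {φ : ℝ[X]}
    (hφ : ∀ z : ℂ, ‖z‖ = 1 → aeval z φ ≠ 0) : Continuous (armaSpectralDensity σ θ φ) := by
  refine Continuous.div (by fun_prop) (by fun_prop) fun ν => ?_
  exact mul_ne_zero (by positivity)
    (pow_ne_zero _ (norm_ne_zero_iff.mpr (hφ _ (norm_exp_neg_ofReal_mul_I ν))))

lemma ae_armaSpectralDensity_pos {σ : ℝ} {θ φ : ℝ[X]} (hσ : σ ≠ 0) (hθ : θ ≠ 0)
    (hφ : ∀ z : ℂ, ‖z‖ = 1 → aeval z φ ≠ 0) : ∀ᵐ ν : ℝ, 0 < armaSpectralDensity σ θ φ ν := by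
  filter_upwards [ae_aeval_exp_neg_mul_I_ne_zero hθ] with ν hν
  have hφν := hφ _ (norm_exp_neg_ofReal_mul_I ν)
  unfold armaSpectralDensity
  positivity

theorem continuousOn_gaussianLogLikelihood {X ι : Type*} [TopologicalSpace X] [Fintype ι]
    [DecidableEq ι] {Ω : X → Matrix ι ι ℝ} {S : Set X} (hΩ : ContinuousOn Ω S)
    (hdet : ∀ x ∈ S, (Ω x).det ≠ 0) (c : ℝ) (v : ι → ℝ) :
    ContinuousOn (fun x => c - 1 / 2 * Real.log (Ω x).det - 1 / 2 * v ⬝ᵥ (Ω x)⁻¹ *ᵥ v) S := by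
  intro x hx
  have hdet_cont := continuous_id.matrix_det.continuousAt.comp_continuousWithinAt (hΩ x hx)
  have hinv_cont : ContinuousWithinAt (fun x => (Ω x)⁻¹) S x := by
    refine (continuousAt_matrix_inv _ ?_).comp_continuousWithinAt (hΩ x hx)
    rw [Ring.inverse_eq_inv']
    exact continuousAt_inv₀ (hdet x hx)
  have hquad : Continuous fun M : Matrix ι ι ℝ => v ⬝ᵥ M *ᵥ v := by fun_prop
  exact (continuousWithinAt_const.sub (continuousWithinAt_const.mul
    (hdet_cont.log (hdet x hx)))).sub
    (continuousWithinAt_const.mul (hquad.continuousAt.comp_continuousWithinAt hinv_cont))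

theorem stmt_0_general (σ : ℝ) (hσ : 0 < σ) (θ φ : Polynomial ℝ) (hθ : θ ≠ 0)
    (hφ : ∀ z : ℂ, ‖z‖ = 1 → Polynomial.aeval z φ ≠ 0)
    (m : ℤ) (n : ℕ)
    (ω : ℝ → ℤ → ℝ)
    (hω : ∀ (d : ℝ) (h : ℤ), ω d h =
      ∫ ν in (-Real.pi)..Real.pi,
        Real.cos ((h : ℝ) * ν) *
          (σ ^ 2 * ‖Polynomial.aeval (Complex.exp (-(↑ν * Complex.I))) θ‖ ^ 2 /
            (2 * Real.pi *
              ‖Polynomial.aeval (Complex.exp (-(↑ν * Complex.I))) φ‖ ^ 2)) *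
          (‖1 - Complex.exp (-(↑ν * Complex.I))‖) ^ (-(2 * (d - (m : ℝ)))))
    (Ω : ℝ → Matrix (Fin n) (Fin n) ℝ)
    (hΩ : ∀ (d : ℝ) (i i' : Fin n), Ω d i i' = ω d ((i : ℤ) - (i' : ℤ)))
    (v : Fin n → ℝ) :
    (∀ d : ℝ, d < (m : ℝ) + 1 / 2 → (Ω d).IsSymm ∧ (Ω d).PosDef) ∧
    ContinuousOn
      (fun d : ℝ =>
        -((n : ℝ) / 2) * Real.log (2 * Real.pi) - (1 / 2) * Real.log (Ω d).det -
          (1 / 2) * dotProduct v (Matrix.mulVec (Ω d)⁻¹ v))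
      (Set.Iio ((m : ℝ) + 1 / 2)) := by
  let f := armaSpectralDensity σ θ φ
  let s : ℝ → ℝ := fun d => -(2 * (d - m))
  have hs : MapsTo s (Iio (m + 1 / 2)) (Ioi (-1)) := fun d (hd : d < m + 1 / 2) => by
    simp only [s, mem_Ioi]
    linarith
  have hf : Continuous f := continuous_armaSpectralDensity σ θ hφ
  have hΩ_eq : ∀ d, Ω d = Matrix.of fun i j : Fin n => ω d (i - j) := fun d => Matrix.ext (hΩ d)
  have hpos : ∀ d < (m : ℝ) + 1 / 2, (Ω d).PosDef := by
    intro d hd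
    rw [hΩ_eq]
    refine posDef_toeplitz_of_eq_integral_cos_mul (w := fun ν => f ν * diffGain ν ^ s d)
      ((intervalIntegrable_diffGain_rpow (hs hd)).continuousOn_mul hf.continuousOn) ?_
      fun h => by rw [hω]; congr 1; funext ν; exact mul_assoc _ _ _
    filter_upwards [ae_armaSpectralDensity_pos hσ.ne' hθ hφ, ae_diffGain_pos] with ν hfν hbν
    exact mul_pos hfν (Real.rpow_pos_of_pos hbν _)
  have hcont : ContinuousOn Ω (Iio (m + 1 / 2)) := by
    refine continuousOn_pi.mpr fun i => continuousOn_pi.mpr fun j => ?_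
    simp only [hΩ, hω]
    exact (continuousOn_integral_mul_diffGain_rpow
      (f := fun ν => Real.cos (((i - j : ℤ) : ℝ) * ν) * f ν) (by fun_prop)).comp (by fun_prop) hs
  exact ⟨fun d hd => ⟨isHermitian_iff_isSymm.mp (hpos d hd).isHermitian, hpos d hd⟩,
    continuousOn_gaussianLogLikelihood hcont (fun d hd => (hpos d hd).det_pos.ne') _ v⟩

/-- with ω(h;d) the lag-h autocovariance of the m-times differenced
ARFIMA process (given by its spectral representation) and Ω(d) the n×n Toeplitz
matrix with entries ω(i-i'; d), the matrix Ω(d) is symmetric positive definite for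
every d < m + 1/2, and the Gaussian log-likelihood
d ↦ -(n/2)log(2π) - (1/2)log det Ω(d) - (1/2) vᵀ Ω(d)⁻¹ v
is continuous on (-∞, m + 1/2). -/
theorem stmt_0 (σ : ℝ) (hσ : 0 < σ) (θ φ : Polynomial ℝ) (hθ : θ ≠ 0)
    (hφ : ∀ z : ℂ, ‖z‖ = 1 → Polynomial.aeval z φ ≠ 0)
    (m : ℤ) (n : ℕ) (hn : 1 ≤ n)
    (ω : ℝ → ℤ → ℝ)
    (hω : ∀ (d : ℝ) (h : ℤ), ω d h =
      ∫ ν in (-Real.pi)..Real.pi,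
        Real.cos ((h : ℝ) * ν) *
          (σ ^ 2 * ‖Polynomial.aeval (Complex.exp (-(↑ν * Complex.I))) θ‖ ^ 2 /
            (2 * Real.pi *
              ‖Polynomial.aeval (Complex.exp (-(↑ν * Complex.I))) φ‖ ^ 2)) *
          (‖1 - Complex.exp (-(↑ν * Complex.I))‖) ^ (-(2 * (d - (m : ℝ)))))
    (Ω : ℝ → Matrix (Fin n) (Fin n) ℝ)
    (hΩ : ∀ (d : ℝ) (i i' : Fin n), Ω d i i' = ω d ((i : ℤ) - (i' : ℤ)))
    (v : Fin n → ℝ) :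
    (∀ d : ℝ, d < (m : ℝ) + 1 / 2 → (Ω d).IsSymm ∧ (Ω d).PosDef) ∧
    ContinuousOn
      (fun d : ℝ =>
        -((n : ℝ) / 2) * Real.log (2 * Real.pi) - (1 / 2) * Real.log (Ω d).det -
          (1 / 2) * dotProduct v (Matrix.mulVec (Ω d)⁻¹ v))
      (Set.Iio ((m : ℝ) + 1 / 2)) :=
  stmt_0_general σ hσ θ φ hθ hφ m n ω hω Ω hΩ v
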